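/- A pair (X,Y) is a ⟨U,U⟩-model of P if and only if (X,Y) is an SE-model of P, i.e., X ⊆ Y, Y ⊨ P, and X ⊨ P^Y. Consequently, ⟨U,U⟩-equivalence coincides with strong equivalence characterized by equality of SE-models. -/

import Mathlib

structure Rule (α : Type*) where
  head : Finset α
  pbody : Finset α
  nbody : Finset α
deriving DecidableEq

abbrev Program (α : Type*) := Finset (Rule α)

variable {α : Type*} [DecidableEq α]

/-- An interpretation `Y` satisfies a rule. -/
def satRule (Y : Finset α) (r : Rule α) : Prop :=
  r.pbody ⊆ Y → r.nbody ∩ Y = ∅ → (r.head ∩ Y).Nonempty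

/-- `Y` is a model of the program `P`. -/
def satProg (Y : Finset α) (P : Program α) : Prop := ∀ r ∈ P, satRule Y r

/-- The Gelfond–Lifschitz reduct `P^Y`. -/
def reduct (P : Program α) (Y : Finset α) : Program α :=
  (P.filter (fun r => r.nbody ∩ Y = ∅)).image (fun r => ⟨r.head, r.pbody, ∅⟩)

/-- `Y` is an answer set of `P`: a minimal model of `P^Y`. -/
def isAS (P : Program α) (Y : Finset α) : Prop :=
  satProg Y (reduct P Y) ∧ ∀ Z, Z ⊂ Y → ¬ satProg Z (reduct P Y)

def heads (P : Program α) : Finset α := P.biUnion Rule.head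
def bodies (P : Program α) : Finset α := P.biUnion (fun r => r.pbody ∪ r.nbody)

/-- A positive program: no default negation. -/
def Positive (P : Program α) : Prop := ∀ r ∈ P, r.nbody = ∅

/-- A unary program: only facts `a ←` and rules `a ← b`. -/
def Unary (P : Program α) : Prop :=
  ∀ r ∈ P, r.nbody = ∅ ∧ r.head.card = 1 ∧ r.pbody.card ≤ 1

/-- Membership in the class `C_⟨H,B⟩`. -/
def inClass (H B : Finset α) (P : Program α) : Prop := heads P ⊆ H ∧ bodies P ⊆ B

/-- `V ⪯_H^B Z`. -/
def preceq (H B V Z : Finset α) : Prop := V ∩ H ⊆ Z ∩ H ∧ Z ∩ B ⊆ V ∩ B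

/-- `V ≺_H^B Z`. -/
def prec (H B V Z : Finset α) : Prop := preceq H B V Z ∧ V ∩ (H ∪ B) ≠ Z ∩ (H ∪ B)

/-- `Y` is an `H`-total model of `P`. -/
def Htotal (H : Finset α) (P : Program α) (Y : Finset α) : Prop :=
  satProg Y P ∧ ∀ Z, Z ⊂ Y → satProg Z (reduct P Y) → Z ∩ H ⊂ Y ∩ H

/-- The containment `P ⊆_⟨H,B⟩ Q`. -/
def containsHB (H B : Finset α) (P Q : Program α) : Prop :=
  ∀ R : Program α, inClass H B R → ∀ Y, isAS (P ∪ R) Y → isAS (Q ∪ R) Y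

/-- The equivalence `P ≡_⟨H,B⟩ Q`. -/
def equivHB (H B : Finset α) (P Q : Program α) : Prop :=
  ∀ R : Program α, inClass H B R → ∀ Y, isAS (P ∪ R) Y ↔ isAS (Q ∪ R) Y

/-- A witness against `P ⊆_⟨H,B⟩ Q`. -/
def Witness (H B : Finset α) (P Q : Program α) (X Y : Finset α) : Prop :=
  X ⊆ Y ∧ Htotal H P Y ∧
    (satProg Y Q → X ⊂ Y ∧ satProg X (reduct Q Y) ∧
      ∀ X', preceq H B X X' → X' ⊂ Y → ¬ satProg X' (reduct P Y))

/-- `(X,Y)` is `⪯_H^B`-maximal for `P`. -/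
def maximalHB (H B : Finset α) (P : Program α) (X Y : Finset α) : Prop :=
  satProg X (reduct P Y) ∧ ∀ X', prec H B X X' → X' ⊂ Y → ¬ satProg X' (reduct P Y)

/-- `(X,Y)` is an `⟨H,B⟩`-model of `P`. -/
def HBmodel (H B : Finset α) (P : Program α) (X Y : Finset α) : Prop :=
  X ⊆ Y ∧ Htotal H P Y ∧
    (X ⊂ Y → ∃ X', X' ⊂ Y ∧ X' ∩ (H ∪ B) = X ∧ maximalHB H B P X' Y)

/-
For `H = B = U` the order `≺_U^U` is empty, so `⟨U,U⟩`-models are literally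
SE-models. A program with the same SE-models as `P` also has the same answer sets as `P` in every
context, since `Y` is an answer set of `P ∪ R` exactly when `(Y,Y)` is, and no `(X,Y)` with `X ⊊ Y`
is, an SE-model of both `P` and `R`. Conversely, for `X ⊆ Y` the positive program with facts `X`
and rules `a ← b` for `a, b ∈ Y \ X` has only `X` and `Y` as models inside `Y`; adding it to `P`
makes `Y` an answer set precisely when `Y ⊨ P` and, if `X ⊊ Y`, `X ⊭ P^Y`, so equivalence in all
contexts recovers the SE-models.
-/

open Finset

def SEModel (P : Program α) (X Y : Finset α) : Prop :=
  X ⊆ Y ∧ satProg Y P ∧ satProg X (reduct P Y)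

section Satisfaction

variable {X Y Z : Finset α} {P R : Program α}

lemma satProg_union : satProg Z (P ∪ R) ↔ satProg Z P ∧ satProg Z R :=
  forall_mem_union

lemma reduct_union : reduct (P ∪ R) Y = reduct P Y ∪ reduct R Y := by
  rw [reduct, reduct, reduct, filter_union, image_union]

lemma satProg_reduct_iff :
    satProg Z (reduct P Y) ↔
      ∀ r ∈ P, r.nbody ∩ Y = ∅ → r.pbody ⊆ Z → (r.head ∩ Z).Nonempty := by
  simp only [satProg, reduct, forall_mem_image, mem_filter, satRule, empty_inter,
    forall_const, and_imp]

lemma satProg_reduct_self : satProg Y (reduct P Y) ↔ satProg Y P := by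
  rw [satProg_reduct_iff]
  exact forall₂_congr fun r _ => imp.swap

lemma Positive.satProg_reduct_iff (hR : Positive R) :
    satProg Z (reduct R Y) ↔ satProg Z R := by
  rw [_root_.satProg_reduct_iff]
  refine forall₂_congr fun r hr => ?_
  simp [satRule, hR r hr]

lemma satProg_reduct_union (hR : Positive R) :
    satProg Z (reduct (P ∪ R) Y) ↔ satProg Z (reduct P Y) ∧ satProg Z R := by
  rw [reduct_union, satProg_union, hR.satProg_reduct_iff]

lemma satRule_fact {a : α} : satRule Z ⟨{a}, ∅, ∅⟩ ↔ a ∈ Z := by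
  simp [satRule, Finset.Nonempty]

lemma satRule_unary {a b : α} : satRule Z ⟨{a}, {b}, ∅⟩ ↔ (b ∈ Z → a ∈ Z) := by
  simp [satRule, Finset.Nonempty]

end Satisfaction

section SEModels

variable {X Y : Finset α} {P Q R : Program α}

lemma SEModel_self_iff : SEModel P Y Y ↔ satProg Y P := by
  simp only [SEModel, satProg_reduct_self, Subset.refl, true_and, and_self]

lemma SEModel_union : SEModel (P ∪ R) X Y ↔ SEModel P X Y ∧ SEModel R X Y := by
  simp only [SEModel, satProg_union, reduct_union]
  tauto

lemma isAS_iff_SEModel : isAS P Y ↔ SEModel P Y Y ∧ ∀ X ⊂ Y, ¬ SEModel P X Y := by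
  rw [SEModel_self_iff, isAS, satProg_reduct_self]
  refine and_congr_right fun hY => forall₂_congr fun X hX => not_congr ?_
  exact ⟨fun h => ⟨hX.subset, hY, h⟩, fun h => h.2.2⟩

theorem equivHB_of_SEModel_iff {H B : Finset α} (h : ∀ X Y, SEModel P X Y ↔ SEModel Q X Y) :
    equivHB H B P Q := by
  intro R _ Y
  simp only [isAS_iff_SEModel, SEModel_union, h]

end SEModels

section SeparatingProgram

variable {X Y Z : Finset α} {P : Program α}

def separatingProgram (X Y : Finset α) : Program α :=
  X.image (fun a => ⟨{a}, ∅, ∅⟩) ∪ ((Y \ X) ×ˢ (Y \ X)).image (fun p => ⟨{p.1}, {p.2}, ∅⟩)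

lemma positive_separatingProgram : Positive (separatingProgram X Y) := by
  simp only [Positive, separatingProgram, forall_mem_union, forall_mem_image, implies_true,
    and_self]

lemma satProg_separatingProgram_iff :
    satProg Z (separatingProgram X Y) ↔
      X ⊆ Z ∧ ∀ a b, a ∈ Y \ X → b ∈ Y \ X → b ∈ Z → a ∈ Z := by
  simp only [satProg, separatingProgram, forall_mem_union, forall_mem_image, satRule_fact,
    satRule_unary, Prod.forall, mem_product, and_imp]
  rfl

lemma satProg_separatingProgram_iff_of_subset (hXY : X ⊆ Y) (hZY : Z ⊆ Y) :
    satProg Z (separatingProgram X Y) ↔ Z = X ∨ Z = Y := by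
  rw [satProg_separatingProgram_iff]
  constructor
  · rintro ⟨hXZ, hclosed⟩
    by_cases hmeet : ∃ b ∈ Y \ X, b ∈ Z
    · obtain ⟨b, hb, hbZ⟩ := hmeet
      refine Or.inr (Subset.antisymm hZY fun a ha => ?_)
      by_cases haX : a ∈ X
      · exact hXZ haX
      · exact hclosed a b (mem_sdiff.2 ⟨ha, haX⟩) hb hbZ
    · refine Or.inl (Subset.antisymm (fun z hz => ?_) hXZ)
      by_contra hzX
      exact hmeet ⟨z, mem_sdiff.2 ⟨hZY hz, hzX⟩, hz⟩
  · rintro (rfl | rfl)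
    · exact ⟨Subset.refl _, fun a b _ hb hbZ => absurd hbZ (mem_sdiff.1 hb).2⟩
    · exact ⟨hXY, fun a _ ha _ _ => (mem_sdiff.1 ha).1⟩

lemma isAS_union_separatingProgram_iff (hXY : X ⊆ Y) :
    isAS (P ∪ separatingProgram X Y) Y ↔ satProg Y P ∧ (X ⊂ Y → ¬ satProg X (reduct P Y)) := by
  simp only [isAS, satProg_reduct_union positive_separatingProgram, satProg_reduct_self]
  constructor
  · rintro ⟨⟨hYP, -⟩, hmin⟩
    exact ⟨hYP, fun hss hX =>
      hmin X hss ⟨hX, (satProg_separatingProgram_iff_of_subset hXY hXY).2 (Or.inl rfl)⟩⟩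
  · rintro ⟨hYP, hX⟩
    refine ⟨⟨hYP, (satProg_separatingProgram_iff_of_subset hXY Subset.rfl).2 (Or.inr rfl)⟩, ?_⟩
    rintro Z hZY ⟨hZP, hZR⟩
    rcases (satProg_separatingProgram_iff_of_subset hXY hZY.subset).1 hZR with rfl | rfl
    · exact hX hZY hZP
    · exact hZY.ne rfl

end SeparatingProgram

section Universe

variable [Fintype α] {V X Y Z : Finset α} {P Q : Program α}

lemma not_prec_univ_univ : ¬ prec univ univ V Z := by
  simp only [prec, preceq, inter_univ, union_self]
  exact fun ⟨⟨hVZ, hZV⟩, hne⟩ => hne (Subset.antisymm hVZ hZV)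

lemma maximalHB_univ_univ_iff : maximalHB univ univ P X Y ↔ satProg X (reduct P Y) := by
  simp only [maximalHB, not_prec_univ_univ, IsEmpty.forall_iff, implies_true, and_true]

lemma Htotal_univ_iff : Htotal univ P Y ↔ satProg Y P := by
  simp only [Htotal, inter_univ]
  exact and_iff_left fun Z hZ _ => hZ

theorem HBmodel_univ_univ_iff : HBmodel univ univ P X Y ↔ SEModel P X Y := by
  simp only [HBmodel, SEModel, Htotal_univ_iff, maximalHB_univ_univ_iff, inter_univ, union_self]
  constructor
  · rintro ⟨hXY, hYP, hX⟩
    refine ⟨hXY, hYP, ?_⟩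
    rcases hXY.eq_or_ssubset with rfl | hss
    · exact satProg_reduct_self.2 hYP
    · obtain ⟨X', -, rfl, hX'⟩ := hX hss
      exact hX'
  · rintro ⟨hXY, hYP, hX⟩
    exact ⟨hXY, hYP, fun hss => ⟨X, hss, rfl, hX⟩⟩

theorem SEModel_iff_of_equivHB (h : equivHB univ univ P Q) : SEModel P X Y ↔ SEModel Q X Y := by
  have hAS {X} (hXY : X ⊆ Y) : (satProg Y P ∧ (X ⊂ Y → ¬ satProg X (reduct P Y))) ↔
      (satProg Y Q ∧ (X ⊂ Y → ¬ satProg X (reduct Q Y))) := by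
    rw [← isAS_union_separatingProgram_iff hXY, ← isAS_union_separatingProgram_iff hXY]
    exact h _ ⟨subset_univ _, subset_univ _⟩ Y
  have hY : satProg Y P ↔ satProg Y Q := by
    simpa using hAS Subset.rfl
  by_cases hXY : X ⊆ Y
  · rcases hXY.eq_or_ssubset with rfl | hss
    · rw [SEModel_self_iff, SEModel_self_iff, hY]
    · have hX := hAS hXY
      simp only [hss, forall_const] at hX
      simp only [SEModel, hXY, true_and]
      tauto
  · simp only [SEModel, hXY, false_and]

end Universe

theorem UU_models_are_SE_models [Fintype α] (P Q : Program α) :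
    (∀ X Y : Finset α,
      HBmodel (Finset.univ : Finset α) (Finset.univ : Finset α) P X Y ↔
        X ⊆ Y ∧ satProg Y P ∧ satProg X (reduct P Y)) ∧
    (equivHB (Finset.univ : Finset α) (Finset.univ : Finset α) P Q ↔
      ∀ X Y : Finset α,
        (X ⊆ Y ∧ satProg Y P ∧ satProg X (reduct P Y)) ↔
        (X ⊆ Y ∧ satProg Y Q ∧ satProg X (reduct Q Y))) :=
  ⟨fun _ _ => HBmodel_univ_univ_iff,
    fun h _ _ => SEModel_iff_of_equivHB h, equivHB_of_SEModel_iff⟩
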